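/- Let 0 < λ < μ and let G : (0,∞) → ℝ and M : ℝ → ℝ be functions such that for every real s > 0 both identities hold: (s - ξ⁺(s))·G(s) = λ(1-λ/μ)s/(2(s+μ)) + λμ(s - ξ⁺(s))/(2(μ+ξ⁺(s))(μ+s))·M((s+ξ⁺(s))/2), and (s - ξ⁻(s))·G(s) = λ(1-λ/μ)s/(2(s+μ)) + λμ(s - ξ⁻(s))/(2(μ+ξ⁻(s))(μ+s))·M((s+ξ⁻(s))/2). Then for every z > 0, M(z) = q(z)·M(h(z)) + L(z). -/
import Mathlib


noncomputable section

/-- The quadratic discriminant `D(s)` of the symmetric SQF model. -/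
def Dq (lam mu s : ℝ) : ℝ :=
  (mu ^ 2 - lam * mu / 2 + (mu - lam) * s) ^ 2 + 2 * lam * mu * s * (mu + s)

/-- The branch `ξ⁺(s)` of the quadratic `(s+μ)ξ² + (μ²-λμ/2+(μ-λ)s)ξ - λμs/2 = 0`. -/
def xiPlus (lam mu s : ℝ) : ℝ :=
  (-(mu ^ 2 - lam * mu / 2 + (mu - lam) * s) + Real.sqrt (Dq lam mu s)) / (2 * (s + mu))

/-- The branch `ξ⁻(s)` of the quadratic `(s+μ)ξ² + (μ²-λμ/2+(μ-λ)s)ξ - λμs/2 = 0`. -/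
def xiMinus (lam mu s : ℝ) : ℝ :=
  (-(mu ^ 2 - lam * mu / 2 + (mu - lam) * s) - Real.sqrt (Dq lam mu s)) / (2 * (s + mu))

/-- The key cubic polynomial `R(w,z)` of the symmetric SQF model. -/
def Rcub (lam mu w z : ℝ) : ℝ :=
  w ^ 3 - (lam - z) * w ^ 2 - (z + mu) ^ 2 * w - z * (z + mu) * (z + mu - lam)

/-- `s(z) = z - α(z)`, given the branch `α` of the cubic. -/
def sfun (alpha : ℝ → ℝ) (z : ℝ) : ℝ := z - alpha z

/-- `h(z) = (s(z) + ξ⁺(s(z)))/2`, given the branch `α` of the cubic. -/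
def hfun (lam mu : ℝ) (alpha : ℝ → ℝ) (z : ℝ) : ℝ :=
  (sfun alpha z + xiPlus lam mu (sfun alpha z)) / 2

/-- `q(z) = (μ + ξ⁻)/(μ + ξ⁺(s(z)))` where `ξ⁻ = z + α(z)`. -/
def qfun (lam mu : ℝ) (alpha : ℝ → ℝ) (z : ℝ) : ℝ :=
  (mu + (z + alpha z)) / (mu + xiPlus lam mu (sfun alpha z))

/-- `L(z) = (1-λ/μ)·s(z)·(ξ⁺(s(z)) - ξ⁻)/((s(z)-ξ⁺(s(z)))·(s(z)-ξ⁻))·(μ+ξ⁻)/μ`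
where `ξ⁻ = z + α(z)`. -/
def Lfun (lam mu : ℝ) (alpha : ℝ → ℝ) (z : ℝ) : ℝ :=
  (1 - lam / mu) * sfun alpha z * (xiPlus lam mu (sfun alpha z) - (z + alpha z)) /
      ((sfun alpha z - xiPlus lam mu (sfun alpha z)) * (sfun alpha z - (z + alpha z))) *
    (mu + (z + alpha z)) / mu

lemma Dq_pos {lam mu s : ℝ} (hlam : 0 < lam) (hmu : 0 < mu) (hs : 0 < s) :
    0 < Dq lam mu s := by
  have h1 : 0 < 2 * lam * mu * s * (mu + s) := by positivity
  have h2 : 0 ≤ (mu ^ 2 - lam * mu / 2 + (mu - lam) * s) ^ 2 := sq_nonneg _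
  simp only [Dq]; linarith

lemma xiPlus_eq {lam mu s : ℝ} (hsm : s + mu ≠ 0) :
    2 * (s + mu) * xiPlus lam mu s + (mu ^ 2 - lam * mu / 2 + (mu - lam) * s)
      = Real.sqrt (Dq lam mu s) := by
  simp only [xiPlus]; field_simp; ring

lemma xiMinus_eq {lam mu s : ℝ} (hsm : s + mu ≠ 0) :
    2 * (s + mu) * xiMinus lam mu s + (mu ^ 2 - lam * mu / 2 + (mu - lam) * s)
      = -Real.sqrt (Dq lam mu s) := by
  simp only [xiMinus]; field_simp; ring

lemma xiPlus_root {lam mu s : ℝ} (hlam : 0 < lam) (hmu : 0 < mu) (hs : 0 < s) :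
    (s + mu) * xiPlus lam mu s ^ 2 +
      (mu ^ 2 - lam * mu / 2 + (mu - lam) * s) * xiPlus lam mu s - lam * mu * s / 2 = 0 := by
  have hsm : (0:ℝ) < s + mu := by linarith
  have h1 := xiPlus_eq (lam := lam) (mu := mu) (s := s) hsm.ne'
  have hd2 : Real.sqrt (Dq lam mu s) ^ 2
      = (mu ^ 2 - lam * mu / 2 + (mu - lam) * s) ^ 2 + 2 * lam * mu * s * (mu + s) := by
    rw [Real.sq_sqrt (Dq_pos hlam hmu hs).le]; rfl
  have h2 : (2 * (s + mu) * xiPlus lam mu s + (mu ^ 2 - lam * mu / 2 + (mu - lam) * s)) ^ 2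
      = (mu ^ 2 - lam * mu / 2 + (mu - lam) * s) ^ 2 + 2 * lam * mu * s * (mu + s) := by
    rw [h1]; exact hd2
  have h3 : (4 * (s + mu)) * ((s + mu) * xiPlus lam mu s ^ 2 +
      (mu ^ 2 - lam * mu / 2 + (mu - lam) * s) * xiPlus lam mu s - lam * mu * s / 2) = 0 := by
    linear_combination h2
  have h4 : (4:ℝ) * (s + mu) ≠ 0 := by positivity
  exact (mul_eq_zero.mp h3).resolve_left h4

lemma xiMinus_root {lam mu s : ℝ} (hlam : 0 < lam) (hmu : 0 < mu) (hs : 0 < s) :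
    (s + mu) * xiMinus lam mu s ^ 2 +
      (mu ^ 2 - lam * mu / 2 + (mu - lam) * s) * xiMinus lam mu s - lam * mu * s / 2 = 0 := by
  have hsm : (0:ℝ) < s + mu := by linarith
  have h1 := xiMinus_eq (lam := lam) (mu := mu) (s := s) hsm.ne'
  have hd2 : Real.sqrt (Dq lam mu s) ^ 2
      = (mu ^ 2 - lam * mu / 2 + (mu - lam) * s) ^ 2 + 2 * lam * mu * s * (mu + s) := by
    rw [Real.sq_sqrt (Dq_pos hlam hmu hs).le]; rfl
  have h2 : (2 * (s + mu) * xiMinus lam mu s + (mu ^ 2 - lam * mu / 2 + (mu - lam) * s)) ^ 2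
      = (mu ^ 2 - lam * mu / 2 + (mu - lam) * s) ^ 2 + 2 * lam * mu * s * (mu + s) := by
    rw [h1, neg_pow]; simpa using hd2
  have h3 : (4 * (s + mu)) * ((s + mu) * xiMinus lam mu s ^ 2 +
      (mu ^ 2 - lam * mu / 2 + (mu - lam) * s) * xiMinus lam mu s - lam * mu * s / 2) = 0 := by
    linear_combination h2
  have h4 : (4:ℝ) * (s + mu) ≠ 0 := by positivity
  exact (mul_eq_zero.mp h3).resolve_left h4

lemma xiPlus_pos {lam mu s : ℝ} (hlam : 0 < lam) (hmu : 0 < mu) (hs : 0 < s) :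
    0 < xiPlus lam mu s := by
  have hsm : (0:ℝ) < s + mu := by linarith
  have hd2 : Real.sqrt (Dq lam mu s) ^ 2
      = (mu ^ 2 - lam * mu / 2 + (mu - lam) * s) ^ 2 + 2 * lam * mu * s * (mu + s) := by
    rw [Real.sq_sqrt (Dq_pos hlam hmu hs).le]; rfl
  have hdn : 0 ≤ Real.sqrt (Dq lam mu s) := Real.sqrt_nonneg _
  have hpos : 0 < 2 * lam * mu * s * (mu + s) := by positivity
  have key : mu ^ 2 - lam * mu / 2 + (mu - lam) * s < Real.sqrt (Dq lam mu s) := by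
    nlinarith [hd2, hdn, hpos]
  simp only [xiPlus]
  apply div_pos (by linarith) (by linarith)

lemma xi_sum {lam mu s : ℝ} (hsm : s + mu ≠ 0) :
    (s + mu) * (xiPlus lam mu s + xiMinus lam mu s)
      = -(mu ^ 2 - lam * mu / 2 + (mu - lam) * s) := by
  simp only [xiPlus, xiMinus]; field_simp; ring

set_option maxHeartbeats 1000000 in
theorem stmt_16 (lam mu : ℝ) (hlam : 0 < lam) (hmu : lam < mu)
    (alpha : ℝ → ℝ)
    (halpha : ∀ z : ℝ, 0 < z → Rcub lam mu (alpha z) z = 0 ∧ alpha z < -z ∧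
      ∀ w : ℝ, Rcub lam mu w z = 0 → w < -z → w = alpha z)
    (G M : ℝ → ℝ)
    (hplus : ∀ s : ℝ, 0 < s →
      (s - xiPlus lam mu s) * G s =
        lam * (1 - lam / mu) * s / (2 * (s + mu)) +
          lam * mu * (s - xiPlus lam mu s) /
              (2 * (mu + xiPlus lam mu s) * (mu + s)) *
            M ((s + xiPlus lam mu s) / 2))
    (hminus : ∀ s : ℝ, 0 < s →
      (s - xiMinus lam mu s) * G s =
        lam * (1 - lam / mu) * s / (2 * (s + mu)) +
          lam * mu * (s - xiMinus lam mu s) /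
              (2 * (mu + xiMinus lam mu s) * (mu + s)) *
            M ((s + xiMinus lam mu s) / 2)) :
    ∀ z : ℝ, 0 < z →
      M z = qfun lam mu alpha z * M (hfun lam mu alpha z) + Lfun lam mu alpha z := by
  intro z hz
  obtain ⟨hR, hlt, -⟩ := halpha z hz
  have hmu0 : 0 < mu := hlam.trans hmu
  simp only [qfun, hfun, Lfun, sfun, Rcub] at hR ⊢
  obtain ⟨a, ha⟩ : ∃ a, alpha z = a := ⟨_, rfl⟩
  rw [ha] at hR hlt ⊢
  have hza : z + a < 0 := by linarith
  -- z + a is a root of the quadratic with parameter s = z - a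
  have hQza : (z - a + mu) * (z + a) ^ 2 +
      (mu ^ 2 - lam * mu / 2 + (mu - lam) * (z - a)) * (z + a) - lam * mu * (z - a) / 2 = 0 := by
    linear_combination -hR
  obtain ⟨s, hsd⟩ : ∃ s, z - a = s := ⟨_, rfl⟩
  rw [hsd] at hQza ⊢
  have hs : 0 < s := by rw [← hsd]; linarith
  have hsm : (0:ℝ) < s + mu := by linarith
  have hQp := xiPlus_root (lam := lam) (mu := mu) (s := s) hlam hmu0 hs
  have hQm := xiMinus_root (lam := lam) (mu := mu) (s := s) hlam hmu0 hs
  have hxp_pos := xiPlus_pos (lam := lam) (mu := mu) (s := s) hlam hmu0 hs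
  have hsum := xi_sum (lam := lam) (mu := mu) (s := s) hsm.ne'
  have h1 := hplus s hs
  have h2 := hminus s hs
  obtain ⟨xp, hxp⟩ : ∃ x, xiPlus lam mu s = x := ⟨_, rfl⟩
  obtain ⟨xm, hxm⟩ : ∃ x, xiMinus lam mu s = x := ⟨_, rfl⟩
  rw [hxp] at hQp hxp_pos hsum h1 ⊢
  rw [hxm] at hQm hsum h2
  -- identify z + a with xm
  have hne : z + a ≠ xp := by intro h; rw [h] at hza; linarith
  have hfac : (z + a - xp) * ((s + mu) * (z + a + xp) +
      (mu ^ 2 - lam * mu / 2 + (mu - lam) * s)) = 0 := by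
    linear_combination hQza - hQp
  have hsum2 : (s + mu) * (z + a + xp) + (mu ^ 2 - lam * mu / 2 + (mu - lam) * s) = 0 :=
    (mul_eq_zero.mp hfac).resolve_left (sub_ne_zero.mpr hne)
  have hzm : z + a = xm := by
    have hc : (s + mu) * (z + a) = (s + mu) * xm := by linear_combination hsum2 - hsum
    exact mul_left_cancel₀ hsm.ne' hc
  rw [hzm] at hza ⊢
  -- nonvanishing facts
  have hmuxp : (0:ℝ) < mu + xp := by linarith
  have hmuxm : mu + xm ≠ 0 := by
    intro h
    have hxmm : xm = -mu := by linarith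
    rw [hxmm] at hQm
    have h0 : lam * mu * (mu + s) = 0 := by linear_combination 2 * hQm
    have hp : 0 < lam * mu * (mu + s) := by positivity
    linarith
  have hsxp : s - xp ≠ 0 := by
    intro h
    have hsx : xp = s := by linarith
    rw [hsx] at hQp
    have h0 : s * (s ^ 2 + (2 * mu - lam) * s + mu * (mu - lam)) = 0 := by
      linear_combination hQp
    have t1 : 0 < (2 * mu - lam) * s := mul_pos (by linarith) hs
    have t2 : 0 < mu * (mu - lam) := mul_pos hmu0 (by linarith)
    have t3 : 0 < s ^ 2 := by positivity
    have h1 : 0 < s * (s ^ 2 + (2 * mu - lam) * s + mu * (mu - lam)) :=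
      mul_pos hs (by linarith)
    linarith
  have hxm_neg : xm < 0 := by linarith
  have hsxm : s - xm ≠ 0 := by intro h; linarith
  -- the two functional equations, cleared of denominators
  have hz2 : (s + xm) / 2 = z := by rw [← hzm, ← hsd]; ring
  rw [hz2] at h2
  have hmu_ne : mu ≠ 0 := hmu0.ne'
  have E1 : 2 * mu * (mu + xp) * (mu + s) * ((s - xp) * G s)
      = lam * (mu - lam) * s * (mu + xp) + lam * mu ^ 2 * (s - xp) * M ((s + xp) / 2) := by
    rw [h1]; field_simp; ring
  have E2 : 2 * mu * (mu + xm) * (mu + s) * ((s - xm) * G s)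
      = lam * (mu - lam) * s * (mu + xm) + lam * mu ^ 2 * (s - xm) * M z := by
    rw [h2]; field_simp; ring
  have P' : lam * (mu ^ 2 * (mu + xp) * ((s - xp) * (s - xm)) * M z
        - mu ^ 2 * (mu + xm) * ((s - xp) * (s - xm)) * M ((s + xp) / 2))
      = lam * ((mu - lam) * s * (xp - xm) * (mu + xm) * (mu + xp)) := by
    linear_combination (s - xm) * (mu + xm) * E1 - (s - xp) * (mu + xp) * E2
  have P := mul_left_cancel₀ (show lam ≠ 0 by positivity) P'
  -- finish
  have hC : mu ^ 2 * (mu + xp) * ((s - xp) * (s - xm)) ≠ 0 :=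
    mul_ne_zero (mul_ne_zero (pow_ne_zero 2 hmu_ne) hmuxp.ne') (mul_ne_zero hsxp hsxm)
  apply mul_left_cancel₀ hC
  have hRHSC : mu ^ 2 * (mu + xp) * ((s - xp) * (s - xm)) *
        ((mu + xm) / (mu + xp) * M ((s + xp) / 2) +
          (1 - lam / mu) * s * (xp - xm) / ((s - xp) * (s - xm)) * (mu + xm) / mu)
      = mu ^ 2 * (mu + xm) * ((s - xp) * (s - xm)) * M ((s + xp) / 2)
        + (mu - lam) * s * (xp - xm) * (mu + xm) * (mu + xp) := by
    field_simp
  linear_combination P - hRHSC
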